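/- arXiv:1701.05113 — 7 statements merged into one kernel-verified Lean document; each statement's English description precedes it below -/
import Mathlib

section
/- Let A_0, A_1 be 0-1 matrices indexed by a finite alphabet A. The vertex tree-shift X_{A_0,A_1} is nonempty if and only if A_0 and A_1 simultaneously contain essential submatrices, i.e., there exists a nonempty subset A' ⊆ A such that for every a ∈ A' there exist b, c ∈ A' with A_0(a,b) = 1 and A_1(a,c) = 1. -/
/-- Words over the binary alphabet Σ = {0,1}, encoded as lists of booleans
(0 ↦ `false`, 1 ↦ `true`).  Concatenation of words is list append. -/
abbrev Word : Type := List Bool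

/-- An infinite tree over the alphabet `A`: a labeling of Σ* by `A`. -/
abbrev ITree (A : Type) : Type := Word → A

/-- The shift map σ_w, given by (σ_w t)(x) = t(wx). -/
def shiftW {A : Type} (w : Word) (t : ITree A) : ITree A := fun x => t (w ++ x)

/-- A pattern: a support (set of nodes) together with labels.  Only the values
of `val` on `supp` are relevant. -/
structure Pattern (A : Type) where
  supp : Set Word
  val : Word → A

/-- The support of a pattern is prefix-closed. -/
def Pattern.PrefixClosed {A : Type} (u : Pattern A) : Prop :=
  ∀ x ∈ u.supp, ∀ y : Word, y <+: x → y ∈ u.supp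

/-- A leaf of a pattern: a node of the support none of whose children lies in
the support. -/
def Pattern.IsLeaf {A : Type} (u : Pattern A) (w : Word) : Prop :=
  w ∈ u.supp ∧ ∀ i : Bool, w ++ [i] ∉ u.supp

/-- The pattern `u` is accepted by the tree `t` (rooted at some node `x`). -/
def AcceptedBy {A : Type} (u : Pattern A) (t : ITree A) : Prop :=
  ∃ x : Word, ∀ y ∈ u.supp, u.val y = t (x ++ y)

/-- The pattern `u` is accepted by some tree of `X`. -/
def AcceptedIn {A : Type} (X : Set (ITree A)) (u : Pattern A) : Prop :=
  ∃ t ∈ X, AcceptedBy u t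

/-- The set of trees avoiding every pattern of the forbidden set `F`. -/
def treeShiftOf {A : Type} (F : Set (Pattern A)) : Set (ITree A) :=
  { t | ∀ u ∈ F, ¬ AcceptedBy u t }

/-- A tree-shift: a set of trees of the form `X_F` for a set `F` of finite
(prefix-closed) patterns. -/
def IsTreeShift {A : Type} (X : Set (ITree A)) : Prop :=
  ∃ F : Set (Pattern A), (∀ u ∈ F, u.supp.Finite ∧ u.PrefixClosed) ∧ X = treeShiftOf F

/-- A complete prefix code: a finite set of nonempty words, none a prefix of
another, such that every word of length ≥ max{|p| : p ∈ P} has a prefix in P. -/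
def IsCPC (P : Finset Word) : Prop :=
  ([] : Word) ∉ P ∧
  (∀ p ∈ P, ∀ q ∈ P, p <+: q → p = q) ∧
  (∀ x : Word, P.sup List.length ≤ x.length → ∃ p ∈ P, p <+: x)

/-- Σ^k, the set of all words of length k, as a finite set. -/
def fullCode (k : ℕ) : Finset Word :=
  Finset.image (fun f : Fin k → Bool => List.ofFn f) Finset.univ

/-- Σ_{n-1}: the set of all words of length < n (i.e. length ≤ n-1). -/
def sigmaLt (n : ℕ) : Set Word := { x : Word | x.length < n }

/-- An n-block of `X`: a pattern with support Σ_{n-1} accepted by some tree of `X`. -/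
def IsNBlock {A : Type} (X : Set (ITree A)) (n : ℕ) (u : Pattern A) : Prop :=
  u.supp = sigmaLt n ∧ AcceptedIn X u

/-- A (finite, prefix-closed) pattern accepted by some tree of `X`. -/
def GoodPattern {A : Type} (X : Set (ITree A)) (u : Pattern A) : Prop :=
  u.supp.Finite ∧ u.PrefixClosed ∧ AcceptedIn X u

/-- Patterns `u`, `v` are connected through `P` in `X`: there is `t ∈ X`
agreeing with `u` on its support and with a copy of `v` rooted at `wx` for
every leaf `w` of `u` and every `x ∈ P`. -/
def ConnectedThrough {A : Type} (X : Set (ITree A)) (P : Finset Word) (u v : Pattern A) : Prop :=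
  ∃ t ∈ X, (∀ y ∈ u.supp, t y = u.val y) ∧
    ∀ w : Word, u.IsLeaf w → ∀ x ∈ P, ∀ y ∈ v.supp, t (w ++ x ++ y) = v.val y

/-- Block gluing: a single CPC connects any two n-blocks, for every n. -/
def BlockGluing {A : Type} (X : Set (ITree A)) : Prop :=
  ∃ P : Finset Word, IsCPC P ∧ ∀ n : ℕ, ∀ u v : Pattern A,
    IsNBlock X n u → IsNBlock X n v → ConnectedThrough X P u v

/-- Uniformly block gluing: the CPC can be taken of the form Σ^k. -/
def UniformlyBlockGluing {A : Type} (X : Set (ITree A)) : Prop :=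
  ∃ k : ℕ, IsCPC (fullCode k) ∧ ∀ n : ℕ, ∀ u v : Pattern A,
    IsNBlock X n u → IsNBlock X n v → ConnectedThrough X (fullCode k) u v

/-- Strongly irreducible: a single CPC connects any two accepted patterns. -/
def StronglyIrreducible {A : Type} (X : Set (ITree A)) : Prop :=
  ∃ P : Finset Word, IsCPC P ∧ ∀ u v : Pattern A,
    GoodPattern X u → GoodPattern X v → ConnectedThrough X P u v

/-- Uniformly strongly irreducible: the CPC can be taken of the form Σ^k. -/
def UniformlyStronglyIrreducible {A : Type} (X : Set (ITree A)) : Prop :=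
  ∃ k : ℕ, IsCPC (fullCode k) ∧ ∀ u v : Pattern A,
    GoodPattern X u → GoodPattern X v → ConnectedThrough X (fullCode k) u v

/-- A leaf of a set of nodes. -/
def SetLeaf (L : Set Word) (w : Word) : Prop := w ∈ L ∧ ∀ i : Bool, w ++ [i] ∉ L

/-- Topological mixing. -/
def TopologicallyMixing {A : Type} (X : Set (ITree A)) : Prop :=
  ∀ L1 L2 : Set Word, L1.Finite → L2.Finite →
    (∀ x ∈ L1, ∀ y : Word, y <+: x → y ∈ L1) →
    (∀ x ∈ L2, ∀ y : Word, y <+: x → y ∈ L2) →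
    ∃ P : Finset Word, IsCPC P ∧ ∀ t1 ∈ X, ∀ t2 ∈ X, ∃ t ∈ X,
      (∀ y ∈ L1, t y = t1 y) ∧
      ∀ w : Word, SetLeaf L1 w → ∀ x ∈ P, ∀ y ∈ L2, t (w ++ x ++ y) = t2 y

/-- The vertex tree-shift of the pair of 0-1 matrices `A0`, `A1`. -/
def vertexShift {A : Type} (A0 A1 : A → A → Bool) : Set (ITree A) :=
  { t | ∀ x : Word,
      A0 (t x) (t (x ++ [false])) = true ∧ A1 (t x) (t (x ++ [true])) = true }

/-- The n-blocks of `X`, realized as labelings of Σ_{n-1}; used for counting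
`|B_n(X)|`. -/
def blockFuns {A : Type} (X : Set (ITree A)) (n : ℕ) :
    Set ({ x : Word // x.length < n } → A) :=
  { f | ∃ t ∈ X, ∃ r : Word, ∀ y : { x : Word // x.length < n }, f y = t (r ++ y.val) }

/-! The labels of a tree in `X_{A0,A1}` form an essential set; conversely, a tree is grown
from an essential set top-down, choosing at each node a 0-successor and a 1-successor inside
the set. -/

def ITree.unfold {α : Type} (f : Bool → α → α) (a : α) : ITree α :=
  fun w => w.foldl (fun b i => f i b) a

theorem ITree.unfold_append_singleton {α : Type} (f : Bool → α → α) (a : α) (x : Word)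
    (i : Bool) : ITree.unfold f a (x ++ [i]) = f i (ITree.unfold f a x) := by
  simp [ITree.unfold]

theorem unfold_mem_vertexShift {A : Type} {A0 A1 : A → A → Bool} {f : Bool → A → A}
    (hf : ∀ b, A0 b (f false b) = true ∧ A1 b (f true b) = true) (a : A) :
    ITree.unfold f a ∈ vertexShift A0 A1 := fun x => by
  simpa only [ITree.unfold_append_singleton] using hf (ITree.unfold f a x)

theorem vertexShift_nonempty_of_essential {A : Type} [Nonempty A] {A0 A1 : A → A → Bool}
    (h0 : ∀ a, ∃ b, A0 a b = true) (h1 : ∀ a, ∃ c, A1 a c = true) :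
    (vertexShift A0 A1).Nonempty := by
  choose b hb using h0
  choose c hc using h1
  exact ⟨_, unfold_mem_vertexShift (f := fun i a => if i then c a else b a)
    (fun a => ⟨hb a, hc a⟩) (Classical.arbitrary A)⟩

theorem comp_mem_vertexShift {A B : Type} {A0 A1 : A → A → Bool} {B0 B1 : B → B → Bool}
    (g : A → B) (hg0 : ∀ a a', A0 a a' = true → B0 (g a) (g a') = true)
    (hg1 : ∀ a a', A1 a a' = true → B1 (g a) (g a') = true) {t : ITree A}
    (ht : t ∈ vertexShift A0 A1) : g ∘ t ∈ vertexShift B0 B1 := fun x =>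
  ⟨hg0 _ _ (ht x).1, hg1 _ _ (ht x).2⟩

theorem essential_range_of_mem_vertexShift {A : Type} {A0 A1 : A → A → Bool} {t : ITree A}
    (ht : t ∈ vertexShift A0 A1) :
    ∀ a ∈ Set.range t,
      (∃ b ∈ Set.range t, A0 a b = true) ∧ (∃ c ∈ Set.range t, A1 a c = true) := by
  rintro _ ⟨x, rfl⟩
  exact ⟨⟨_, ⟨_, rfl⟩, (ht x).1⟩, ⟨_, ⟨_, rfl⟩, (ht x).2⟩⟩

theorem stmt1_general {A : Type} (A0 A1 : A → A → Bool) :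
    (vertexShift A0 A1).Nonempty ↔
      ∃ S : Set A, S.Nonempty ∧ ∀ a ∈ S,
        (∃ b ∈ S, A0 a b = true) ∧ (∃ c ∈ S, A1 a c = true) := by
  constructor
  · rintro ⟨t, ht⟩
    exact ⟨Set.range t, Set.range_nonempty t, essential_range_of_mem_vertexShift ht⟩
  · rintro ⟨S, hS, hess⟩
    have : Nonempty S := hS.to_subtype
    obtain ⟨t, ht⟩ := vertexShift_nonempty_of_essential
      (A0 := fun a b : S => A0 a b) (A1 := fun a c : S => A1 a c)
      (fun a => by simpa using (hess a a.2).1) (fun a => by simpa using (hess a a.2).2)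
    exact ⟨_, comp_mem_vertexShift Subtype.val (fun _ _ h => h) (fun _ _ h => h) ht⟩

/-- the vertex tree-shift `X_{A0,A1}` is nonempty iff `A0` and
`A1` simultaneously contain essential submatrices. -/
theorem stmt1 {A : Type} [Fintype A] (A0 A1 : A → A → Bool) :
    (vertexShift A0 A1).Nonempty ↔
      ∃ S : Set A, S.Nonempty ∧ ∀ a ∈ S,
        (∃ b ∈ S, A0 a b = true) ∧ (∃ c ∈ S, A1 a c = true) :=
  stmt1_general A0 A1
end

section
/- There is an aperiodic tree-shift of finite type: for A = {0,1}, A_0(a,b) = 1 iff b ≠ a, and A_1(a,b) = 1 iff b = a, the vertex tree-shift X_{A_0,A_1} is nonempty and contains no periodic tree, i.e., there is no t ∈ X_{A_0,A_1} and complete prefix code P with σ_x t = t for all x ∈ P. -/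
/-! Every tree of the shift is determined by its root: crossing a `0`-edge flips the label
and crossing a `1`-edge keeps it, so `t w = t [] xor (parity of the number of 0s in w)`.
A period `p` of such a tree therefore contains an even number of `0`s. But any complete
prefix code contains a prefix of `0 1 1 ⋯ 1`, which is nonempty and so contains exactly
one `0`. -/

abbrev flipCopyShift : Set (ITree Bool) :=
  vertexShift (fun a b : Bool => decide (b ≠ a)) (fun a b : Bool => decide (b = a))

def zeroParity (w : Word) : Bool := Nat.bodd (w.count false)

@[simp]
lemma zeroParity_nil : zeroParity [] = false := rfl

@[simp]
lemma zeroParity_concat_false (w : Word) : zeroParity (w ++ [false]) = !zeroParity w := by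
  simp [zeroParity, List.count_append]

@[simp]
lemma zeroParity_concat_true (w : Word) : zeroParity (w ++ [true]) = zeroParity w := by
  simp [zeroParity, List.count_append]

@[simp]
lemma zeroParity_false_cons_replicate_true (k : ℕ) :
    zeroParity (false :: List.replicate k true) = true := by
  simp [zeroParity, List.count_replicate]

lemma zeroParity_mem_flipCopyShift : zeroParity ∈ flipCopyShift := fun w => by simp

lemma eq_xor_zeroParity_of_mem_flipCopyShift {t : ITree Bool} (ht : t ∈ flipCopyShift)
    (w : Word) : t w = xor (zeroParity w) (t []) := by
  induction w using List.reverseRecOn with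
  | nil => simp
  | append_singleton w b ih =>
    obtain ⟨h0, h1⟩ := ht w
    cases b
    · simp only [ne_eq, decide_eq_true_eq] at h0
      rw [zeroParity_concat_false, Bool.not_xor, ← ih]
      exact Bool.eq_not.mpr h0
    · simp only [decide_eq_true_eq] at h1
      rw [zeroParity_concat_true, h1, ih]

lemma zeroParity_eq_false_of_shiftW_eq {t : ITree Bool} (ht : t ∈ flipCopyShift) {p : Word}
    (hp : shiftW p t = t) : zeroParity p = false := by
  have hroot : t p = t [] := by simpa [shiftW] using congrFun hp []
  rw [eq_xor_zeroParity_of_mem_flipCopyShift ht p] at hroot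
  exact Bool.xor_left_inj.mp (hroot.trans (Bool.false_xor _).symm)

lemma IsCPC.exists_false_cons_replicate_true_mem {P : Finset Word} (hP : IsCPC P) :
    ∃ k, false :: List.replicate k true ∈ P := by
  obtain ⟨hnil, -, hcover⟩ := hP
  obtain ⟨p, hp, hprefix⟩ :=
    hcover (false :: List.replicate (P.sup List.length) true) (by simp)
  obtain ⟨a, q, rfl⟩ := List.exists_cons_of_ne_nil (ne_of_mem_of_not_mem hp hnil)
  obtain ⟨rfl, hq⟩ := List.cons_prefix_cons.mp hprefix
  obtain ⟨-, hq⟩ := List.prefix_replicate_iff.mp hq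
  exact ⟨q.length, hq ▸ hp⟩

/-- there is an aperiodic tree-shift of finite type: the vertex
tree-shift with A0(a,b) = 1 iff b ≠ a and A1(a,b) = 1 iff b = a is nonempty
and contains no periodic tree. -/
theorem stmt4 :
    (vertexShift (fun a b : Bool => decide (b ≠ a))
        (fun a b : Bool => decide (b = a))).Nonempty ∧
      ¬ ∃ t ∈ vertexShift (fun a b : Bool => decide (b ≠ a))
          (fun a b : Bool => decide (b = a)),
          ∃ P : Finset Word, IsCPC P ∧ ∀ x ∈ P, shiftW x t = t := by
  refine ⟨⟨zeroParity, zeroParity_mem_flipCopyShift⟩, ?_⟩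
  rintro ⟨t, ht, P, hP, hperiodic⟩
  obtain ⟨k, hk⟩ := hP.exists_false_cons_replicate_true_mem
  simpa using zeroParity_eq_false_of_shiftW_eq ht (hperiodic _ hk)
end

section
/- A vertex tree-shift X_{A_0,A_1} is strongly irreducible if and only if it is block gluing. -/
/-! Strong irreducibility trivially implies block gluing, since every n-block is an accepted
pattern. Conversely, membership in a vertex tree-shift is a condition on parent–child pairs only,
so a subtree may be replaced by any tree of the shift having the same root symbol. Block gluing
for 1-blocks yields, for each symbol `a` and each tree `t'` of the shift, a tree with root `a`
carrying `t'` below every word of the code `P`; grafting such trees at the leaves of a tree that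
extends `u`, with `t'` extending `v`, connects `u` and `v` through `P`. -/

variable {A : Type}

def BlockGluingWith (X : Set (ITree A)) (P : Finset Word) : Prop :=
  ∀ n : ℕ, ∀ u v : Pattern A, IsNBlock X n u → IsNBlock X n v → ConnectedThrough X P u v

def StronglyIrreducibleWith (X : Set (ITree A)) (P : Finset Word) : Prop :=
  ∀ u v : Pattern A, GoodPattern X u → GoodPattern X v → ConnectedThrough X P u v

lemma IsNBlock.goodPattern {X : Set (ITree A)} {n : ℕ} {u : Pattern A} (hu : IsNBlock X n u) :
    GoodPattern X u := by
  refine ⟨hu.1 ▸ List.finite_length_lt Bool n, fun x hx y hy => ?_, hu.2⟩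
  rw [hu.1] at hx ⊢
  exact lt_of_le_of_lt hy.length_le hx

lemma StronglyIrreducibleWith.blockGluingWith {X : Set (ITree A)} {P : Finset Word}
    (h : StronglyIrreducibleWith X P) : BlockGluingWith X P :=
  fun _ u v hu hv => h u v hu.goodPattern hv.goodPattern

lemma shiftW_mem_vertexShift {A0 A1 : A → A → Bool} {t : ITree A}
    (ht : t ∈ vertexShift A0 A1) (w : Word) : shiftW w t ∈ vertexShift A0 A1 := by
  intro x
  simpa [shiftW, List.append_assoc] using ht (w ++ x)

lemma AcceptedIn.exists_mem_vertexShift {A0 A1 : A → A → Bool} {u : Pattern A}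
    (hu : AcceptedIn (vertexShift A0 A1) u) :
    ∃ t ∈ vertexShift A0 A1, ∀ y ∈ u.supp, t y = u.val y := by
  obtain ⟨t, ht, x, hx⟩ := hu
  exact ⟨shiftW x t, shiftW_mem_vertexShift ht x, fun y hy => (hx y hy).symm⟩

lemma Pattern.IsLeaf.eq_of_prefix {u : Pattern A} (hu : u.PrefixClosed) {w y : Word}
    (hw : u.IsLeaf w) (hy : y ∈ u.supp) (hwy : w <+: y) : w = y := by
  obtain ⟨r, rfl⟩ := hwy
  cases r with
  | nil => exact (List.append_nil w).symm
  | cons i r => exact absurd (hu _ hy _ ⟨r, by simp⟩) (hw.2 i)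

lemma Pattern.isAntichain_leaves {u : Pattern A} (hu : u.PrefixClosed) :
    IsAntichain List.IsPrefix {w | u.IsLeaf w} :=
  fun _ hp _ hq hne h => hne (hp.eq_of_prefix hu hq.1 h)

/-- `graft C t S` is `t` with the subtree at each `p ∈ C` replaced by `S p`; for it to be
well behaved `C` should be an antichain for the prefix order. -/
noncomputable def graft (C : Set Word) (t : ITree A) (S : Word → ITree A) : ITree A := by
  classical
  exact fun z => if h : ∃ p ∈ C, p <+: z then S h.choose (z.drop h.choose.length) else t z

section graft

variable {C : Set Word} {t : ITree A} {S : Word → ITree A}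

lemma graft_of_not_exists_prefix {z : Word} (hz : ¬ ∃ p ∈ C, p <+: z) : graft C t S z = t z := by
  simp only [graft, dif_neg hz]

lemma graft_append (hC : IsAntichain List.IsPrefix C) {p : Word} (hp : p ∈ C) (y : Word) :
    graft C t S (p ++ y) = S p y := by
  have h : ∃ q ∈ C, q <+: p ++ y := ⟨p, hp, List.prefix_append _ _⟩
  have hchoose : h.choose = p := by
    rcases List.prefix_or_prefix_of_prefix h.choose_spec.2 (List.prefix_append p y) with h' | h'
    · exact hC.eq h.choose_spec.1 hp h'
    · exact (hC.eq hp h.choose_spec.1 h').symm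
  simp only [graft, dif_pos h, hchoose, List.drop_left]

lemma graft_self (hC : IsAntichain List.IsPrefix C) {p : Word} (hp : p ∈ C) :
    graft C t S p = S p [] := by
  simpa using graft_append (t := t) (S := S) hC hp []

lemma graft_mem_vertexShift {A0 A1 : A → A → Bool} (hC : IsAntichain List.IsPrefix C)
    (ht : t ∈ vertexShift A0 A1) (hS : ∀ p ∈ C, S p ∈ vertexShift A0 A1)
    (hroot : ∀ p ∈ C, S p [] = t p) : graft C t S ∈ vertexShift A0 A1 := by
  intro x
  by_cases hx : ∃ p ∈ C, p <+: x
  · obtain ⟨p, hp, y, rfl⟩ := hx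
    simp only [List.append_assoc, graft_append hC hp]
    exact hS p hp y
  · -- a child `x ++ [i]` of `x` is either outside the grafted region or a graft point,
    -- where the new root symbol agrees with `t`
    have hchild : ∀ i : Bool, graft C t S (x ++ [i]) = t (x ++ [i]) := by
      intro i
      by_cases hxi : ∃ p ∈ C, p <+: x ++ [i]
      · obtain ⟨p, hp, hpx⟩ := hxi
        rcases List.prefix_concat_iff.mp hpx with rfl | hpx
        · rw [graft_self hC hp, hroot _ hp]
        · exact absurd ⟨p, hp, hpx⟩ hx
      · exact graft_of_not_exists_prefix hxi
    rw [graft_of_not_exists_prefix hx, hchild, hchild]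
    exact ht x

end graft

lemma BlockGluingWith.exists_root_eq_and_code_eq {X : Set (ITree A)} {P : Finset Word}
    (h : BlockGluingWith X P) {a b : ITree A} (ha : a ∈ X) (hb : b ∈ X) :
    ∃ t ∈ X, t [] = a [] ∧ ∀ x ∈ P, t x = b [] := by
  have hroot : ([] : Word) ∈ sigmaLt 1 := Nat.zero_lt_one
  have hblock : ∀ s ∈ X, IsNBlock X 1 ⟨sigmaLt 1, fun _ => s []⟩ := fun s hs =>
    ⟨rfl, s, hs, [], fun y hy => by rw [List.length_eq_zero_iff.mp (Nat.lt_one_iff.mp hy)]; rfl⟩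
  have hleaf : Pattern.IsLeaf ⟨sigmaLt 1, fun _ => a []⟩ [] :=
    ⟨hroot, fun i hi => by simp [sigmaLt] at hi⟩
  obtain ⟨t, ht, hta, htb⟩ := h 1 _ _ (hblock a ha) (hblock b hb)
  exact ⟨t, ht, hta [] hroot, fun x hx => by simpa using htb [] hleaf x hx [] hroot⟩

lemma BlockGluingWith.exists_vertexShift_root_eq_and_subtrees_eq {A0 A1 : A → A → Bool}
    {P : Finset Word} (hP : IsCPC P) (h : BlockGluingWith (vertexShift A0 A1) P) {a b : ITree A}
    (ha : a ∈ vertexShift A0 A1) (hb : b ∈ vertexShift A0 A1) :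
    ∃ s ∈ vertexShift A0 A1, s [] = a [] ∧ ∀ x ∈ P, ∀ y : Word, s (x ++ y) = b y := by
  obtain ⟨t, ht, hta, htb⟩ := h.exists_root_eq_and_code_eq ha hb
  have hanti : IsAntichain List.IsPrefix (P : Set Word) :=
    fun p hp q hq hne hpq => hne (hP.2.1 p hp q hq hpq)
  refine ⟨graft P t fun _ => b,
    graft_mem_vertexShift hanti ht (fun _ _ => hb) fun p hp => (htb p hp).symm, ?_,
    fun x hx y => graft_append hanti hx y⟩
  refine (graft_of_not_exists_prefix ?_).trans hta
  rintro ⟨p, hp, hpre⟩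
  exact hP.1 (List.prefix_nil.mp hpre ▸ hp)

lemma BlockGluingWith.stronglyIrreducibleWith_vertexShift {A0 A1 : A → A → Bool}
    {P : Finset Word} (hP : IsCPC P) (h : BlockGluingWith (vertexShift A0 A1) P) :
    StronglyIrreducibleWith (vertexShift A0 A1) P := by
  rintro u v ⟨-, hu, hu_acc⟩ ⟨-, -, hv_acc⟩
  obtain ⟨tu, htu, htu_eq⟩ := hu_acc.exists_mem_vertexShift
  obtain ⟨tv, htv, htv_eq⟩ := hv_acc.exists_mem_vertexShift
  have hleaves := Pattern.isAntichain_leaves hu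
  have : Nonempty A := ⟨tu []⟩
  choose! S hS hS_root hS_code using fun w (_ : u.IsLeaf w) =>
    h.exists_vertexShift_root_eq_and_subtrees_eq hP (shiftW_mem_vertexShift htu w) htv
  refine ⟨graft {w | u.IsLeaf w} tu S,
    graft_mem_vertexShift hleaves htu hS fun p hp => by simpa [shiftW] using hS_root p hp,
    fun y hy => ?_, fun w hw x hx y hy => ?_⟩
  · by_cases hpre : ∃ p ∈ {w | u.IsLeaf w}, p <+: y
    · obtain ⟨p, hp, hpy⟩ := hpre
      obtain rfl := hp.eq_of_prefix hu hy hpy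
      rw [graft_self hleaves hp, hS_root p hp, ← htu_eq p hy]
      simp [shiftW]
    · rw [graft_of_not_exists_prefix hpre, htu_eq y hy]
  · rw [List.append_assoc, graft_append hleaves hw, hS_code w hw x hx y, htv_eq y hy]

theorem stmt6_general {A : Type} (A0 A1 : A → A → Bool) :
    StronglyIrreducible (vertexShift A0 A1) ↔ BlockGluing (vertexShift A0 A1) := by
  constructor
  · rintro ⟨P, hP, h⟩
    exact ⟨P, hP, StronglyIrreducibleWith.blockGluingWith h⟩
  · rintro ⟨P, hP, h⟩
    exact ⟨P, hP, BlockGluingWith.stronglyIrreducibleWith_vertexShift hP h⟩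

/-- a vertex tree-shift is strongly irreducible iff it is block
gluing. -/
theorem stmt6 {A : Type} [Fintype A] (A0 A1 : A → A → Bool) :
    StronglyIrreducible (vertexShift A0 A1) ↔ BlockGluing (vertexShift A0 A1) :=
  stmt6_general A0 A1
end

section
/- Let A = {0,1} and F = {(0,0,0), (1,1,1)} (the 2-blocks u with u(ε) = u(0) = u(1)). Then the tree-shift of finite type X_F is not uniformly block gluing: for every k ∈ ℕ there exist n and n-blocks of X_F (for instance the 2-block u = (0,1,0) paired with itself) that are not connected through the complete prefix code Σ^k. -/
/-- The forbidden set F = {(0,0,0), (1,1,1)}: 2-blocks u (support Σ_1) with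
u(ε) = u(0) = u(1). -/
def F910 : Set (Pattern Bool) :=
  { u | u.supp = { x : Word | x.length ≤ 1 } ∧
        u.val [false] = u.val [] ∧ u.val [true] = u.val [] }

/-!
In a tree of `X_F` no node carries the same symbol as both of its children. Hence if a whole
level of the tree is constant, the level above it is constant too, with the opposite symbol.
If the 2-block `(0,1,0)` were glued to itself through `Σ^k`, the level at depth `k + 1` would be
constant (every node on it is the root of a copy of the block), so the level at depth `1` would
be constant as well, contradicting the distinct symbols `1` and `0` at the nodes `0` and `1`.
-/

lemma mem_fullCode {k : ℕ} {x : Word} : x ∈ fullCode k ↔ x.length = k := by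
  simp only [fullCode, Finset.mem_image, Finset.mem_univ, true_and]
  constructor
  · rintro ⟨f, rfl⟩
    exact List.length_ofFn
  · rintro rfl
    exact ⟨x.get, List.ofFn_get x⟩

lemma Pattern.isLeaf_of_supp_eq_sigmaLt {A : Type} {u : Pattern A} {n : ℕ}
    (hu : u.supp = sigmaLt (n + 1)) {w : Word} (hw : w.length = n) : u.IsLeaf w := by
  refine ⟨by simp [hu, sigmaLt, hw], fun i => ?_⟩
  simp [hu, sigmaLt, hw]

lemma ConnectedThrough.exists_constant_level {A : Type} {X : Set (ITree A)} {k n : ℕ}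
    {u v : Pattern A} (huv : ConnectedThrough X (fullCode k) u v)
    (hu : u.supp = sigmaLt (n + 1)) (hv : [] ∈ v.supp) :
    ∃ t ∈ X, (∀ y ∈ u.supp, t y = u.val y) ∧ ∀ w : Word, w.length = n + k → t w = v.val [] := by
  obtain ⟨t, htX, htu, htv⟩ := huv
  refine ⟨t, htX, htu, fun w hw => ?_⟩
  have hsplit := List.take_append_drop n w
  have hleaf := u.isLeaf_of_supp_eq_sigmaLt hu (w := w.take n) (by simp [hw])
  have hcode : w.drop n ∈ fullCode k := mem_fullCode.mpr (by simp [hw])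
  simpa [hsplit] using htv _ hleaf _ hcode [] hv

lemma not_uniformlyBlockGluing_of_forall {A : Type} {X : Set (ITree A)}
    (h : ∀ k : ℕ, ∃ n : ℕ, ∃ u v : Pattern A,
      IsNBlock X n u ∧ IsNBlock X n v ∧ ¬ ConnectedThrough X (fullCode k) u v) :
    ¬ UniformlyBlockGluing X := by
  rintro ⟨k, -, hk⟩
  obtain ⟨n, u, v, hu, hv, huv⟩ := h k
  exact huv (hk n u v hu hv)

lemma mem_treeShiftOf_F910 {t : ITree Bool} :
    t ∈ treeShiftOf F910 ↔ ∀ x : Word, t (x ++ [false]) = t x → t (x ++ [true]) ≠ t x := by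
  constructor
  · intro ht x h0 h1
    exact ht ⟨{ y : Word | y.length ≤ 1 }, fun y => t (x ++ y)⟩
      ⟨rfl, by simpa using h0, by simpa using h1⟩ ⟨x, fun y _ => rfl⟩
  · rintro ht p ⟨hsupp, h0, h1⟩ ⟨x, hx⟩
    have hroot := hx [] (by simp [hsupp])
    have hleft := hx [false] (by simp [hsupp])
    have hright := hx [true] (by simp [hsupp])
    simp only [List.append_nil] at hroot
    exact ht x (by rw [← hleft, ← hroot, h0]) (by rw [← hright, ← hroot, h1])

lemma apply_eq_not_of_level_succ {t : ITree Bool} (ht : t ∈ treeShiftOf F910) {d : ℕ} {c : Bool}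
    (hc : ∀ w : Word, w.length = d + 1 → t w = c) :
    ∀ w : Word, w.length = d → t w = !c := by
  intro w hw
  have h0 : t (w ++ [false]) = c := hc _ (by simp [hw])
  have h1 : t (w ++ [true]) = c := hc _ (by simp [hw])
  by_contra hne
  have hwc : t w = c := by simpa using hne
  exact mem_treeShiftOf_F910.mp ht w (h0.trans hwc.symm) (h1.trans hwc.symm)

lemma apply_eq_iterate_not_of_level {t : ITree Bool} (ht : t ∈ treeShiftOf F910) (d j : ℕ)
    {c : Bool} (hc : ∀ w : Word, w.length = d + j → t w = c) :
    ∀ w : Word, w.length = d → t w = (Bool.not)^[j] c := by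
  induction j generalizing c with
  | zero => simpa using hc
  | succ j ih =>
    rw [Function.iterate_succ_apply]
    exact ih (apply_eq_not_of_level_succ ht hc)

lemma not_connectedThrough_fullCode_F910 (k : ℕ) {u v : Pattern Bool}
    (hu : u.supp = sigmaLt 2) (hu01 : u.val [false] ≠ u.val [true]) (hv : [] ∈ v.supp) :
    ¬ ConnectedThrough (treeShiftOf F910) (fullCode k) u v := by
  intro huv
  obtain ⟨t, ht, htu, hlevel⟩ := huv.exists_constant_level hu hv
  have hlevel1 := apply_eq_iterate_not_of_level ht 1 k hlevel
  have h0 := htu [false] (by simp [hu, sigmaLt])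
  have h1 := htu [true] (by simp [hu, sigmaLt])
  exact hu01 (by rw [← h0, ← h1, hlevel1 [false] rfl, hlevel1 [true] rfl])

/-- The tree labelling a node `1` exactly when it is a left child. -/
def leftChildTree : ITree Bool := fun x => decide (x.getLast? = some false)

lemma leftChildTree_mem : leftChildTree ∈ treeShiftOf F910 :=
  mem_treeShiftOf_F910.mpr fun x h0 h1 => by simp_all [leftChildTree]

def block010 : Pattern Bool := ⟨sigmaLt 2, fun x => decide (x = [false])⟩

lemma isNBlock_block010 : IsNBlock (treeShiftOf F910) 2 block010 := by
  refine ⟨rfl, leftChildTree, leftChildTree_mem, [], fun y hy => ?_⟩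
  match y, hy with
  | [], _ => rfl
  | [b], _ => cases b <;> rfl

/-- X_F for F = {(0,0,0),(1,1,1)} is not uniformly block gluing:
for every k there are n-blocks not connected through Σ^k. -/
theorem stmt10 :
    ¬ UniformlyBlockGluing (treeShiftOf F910) ∧
    ∀ k : ℕ, ∃ n : ℕ, ∃ u v : Pattern Bool,
      IsNBlock (treeShiftOf F910) n u ∧ IsNBlock (treeShiftOf F910) n v ∧
      ¬ ConnectedThrough (treeShiftOf F910) (fullCode k) u v := by
  refine ⟨not_uniformlyBlockGluing_of_forall ?gluing, ?gluing⟩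
  exact fun k => ⟨2, block010, block010, isNBlock_block010, isNBlock_block010,
    not_connectedThrough_fullCode_F910 k rfl (by decide) (by simp [block010, sigmaLt])⟩
end

section
/- Let A = {0,1} and let X = {t : Σ* → A | t(x) = t(y) whenever |x| = |y|} be the set of level-constant trees. Then X is not strongly irreducible: for every complete prefix code P there exist two patterns accepted by X that are not connected through P. -/
/-- The set of level-constant trees over {0,1}. -/
def levelConst : Set (ITree Bool) :=
  { t | ∀ x y : Word, x.length = y.length → t x = t y }

/-! Trees in `levelConst` see only the depth of a node. If a pattern `u` has leaves `w`, `w'` and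
`v` has nodes `y`, `y'` carrying different labels with `|w| + |y| = |w'| + |y'|`, then for any
`p ∈ P` the nodes `w p y` and `w' p y'` lie on the same level, so no level-constant tree can
carry a copy of `v` at both `w p` and `w' p`. Leaves at depths 1 and 2, together with a `v`
whose root and child differ, do this for every complete prefix code. -/

lemma IsCPC.nonempty {P : Finset Word} (hP : IsCPC P) : P.Nonempty := by
  obtain ⟨p, hp, -⟩ := hP.2.2 (List.replicate (P.sup List.length) false) (by simp)
  exact ⟨p, hp⟩

lemma not_connectedThrough_levelConst {P : Finset Word} (hP : P.Nonempty) {u v : Pattern Bool}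
    {w w' y y' : Word} (hw : u.IsLeaf w) (hw' : u.IsLeaf w') (hy : y ∈ v.supp)
    (hy' : y' ∈ v.supp) (hlen : w.length + y.length = w'.length + y'.length)
    (hne : v.val y ≠ v.val y') : ¬ ConnectedThrough levelConst P u v := by
  rintro ⟨t, ht, -, hleaf⟩
  obtain ⟨p, hp⟩ := hP
  have hsame : t (w ++ p ++ y) = t (w' ++ p ++ y') := ht _ _ (by simp; omega)
  rw [hleaf w hw p hp y hy, hleaf w' hw' p hp y' hy'] at hsame
  exact hne hsame

def prefixClosure (S : Finset Word) : Finset Word :=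
  S.biUnion fun s => s.inits.toFinset

lemma mem_prefixClosure {S : Finset Word} {x : Word} :
    x ∈ prefixClosure S ↔ ∃ s ∈ S, x <+: s := by
  simp [prefixClosure, List.mem_inits]

def levelPattern (S : Finset Word) (f : ℕ → Bool) : Pattern Bool :=
  ⟨prefixClosure S, fun x => f x.length⟩

lemma mem_levelPattern_supp {S : Finset Word} {f : ℕ → Bool} {x : Word} :
    x ∈ (levelPattern S f).supp ↔ x ∈ prefixClosure S :=
  Iff.rfl

lemma levelPattern_isLeaf_iff {S : Finset Word} {f : ℕ → Bool} {w : Word} :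
    (levelPattern S f).IsLeaf w ↔
      w ∈ prefixClosure S ∧ ∀ i : Bool, w ++ [i] ∉ prefixClosure S :=
  Iff.rfl

lemma levelPattern_prefixClosed (S : Finset Word) (f : ℕ → Bool) :
    (levelPattern S f).PrefixClosed := by
  intro x hx y hyx
  obtain ⟨s, hs, hxs⟩ := mem_prefixClosure.mp hx
  exact mem_prefixClosure.mpr ⟨s, hs, hyx.trans hxs⟩

lemma goodPattern_levelPattern (S : Finset Word) (f : ℕ → Bool) :
    GoodPattern levelConst (levelPattern S f) :=
  ⟨(prefixClosure S).finite_toSet, levelPattern_prefixClosed S f,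
    fun x => f x.length, fun _ _ h => congrArg f h, [], fun _ _ => rfl⟩

/-- the level-constant tree-shift is not strongly irreducible:
for every CPC P there are two accepted patterns not connected through P. -/
theorem stmt12 :
    ∀ P : Finset Word, IsCPC P →
      ∃ u v : Pattern Bool, GoodPattern levelConst u ∧ GoodPattern levelConst v ∧
        ¬ ConnectedThrough levelConst P u v := by
  intro P hP
  let u := levelPattern {[false, false], [true]} fun _ => true
  let v := levelPattern {[false]} fun n => decide (n = 0)
  have leaf_true : u.IsLeaf [true] := levelPattern_isLeaf_iff.mpr (by decide)
  have leaf_false_false : u.IsLeaf [false, false] := levelPattern_isLeaf_iff.mpr (by decide)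
  refine ⟨u, v, goodPattern_levelPattern _ _, goodPattern_levelPattern _ _, ?_⟩
  exact not_connectedThrough_levelConst hP.nonempty leaf_true leaf_false_false
    (y := [false]) (y' := []) (mem_levelPattern_supp.mpr (by decide))
    (mem_levelPattern_supp.mpr (by decide)) rfl (by decide)
end

section
/- The even tree-shift Y is uniformly strongly irreducible with complete prefix code Σ^4: any two patterns accepted by Y are connected through Σ^4. -/
/-- Number of nodes labeled 1 along the path starting at `s` and descending
along the word `m` (both endpoints included). -/
def pathOnes (t : ITree Bool) (s m : Word) : ℕ :=
  ((Finset.range (m.length + 1)).filter fun j => t (s ++ m.take j) = true).card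

/-- The even tree-shift: (1) along any path the number of 1's between two
consecutive 0's is even; (2) any two paths starting at a common node and
ending at nodes labeled 0 carry the same number of 1's modulo 2. -/
def evenShift : Set (ITree Bool) :=
  { t |
    (∀ s m : Word, m ≠ [] → t s = false → t (s ++ m) = false →
      (∀ j : ℕ, 0 < j → j < m.length → t (s ++ m.take j) = true) →
      Even (m.length - 1)) ∧
    (∀ s m1 m2 : Word, t (s ++ m1) = false → t (s ++ m2) = false →
      pathOnes t s m1 % 2 = pathOnes t s m2 % 2) }


/-!
A tree lies in the even tree-shift exactly when all of its `0`-nodes have the same parity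
of `1`s on their path from the root. To connect `u` to `v`, keep a tree `t₁` realising `u` on
the support of `u`, label everything hanging off a non-leaf of the support by `1`, and below
each leaf `p` insert four levels before a copy of a tree `t₂` realising `v`: level one fixes
the parity mismatch between `p` and the `0`-nodes of `t₁`, level two compensates in advance
the parity of the `0`-nodes of `t₂`, level three is a `1`. Every `0`-node of the glued tree
then has the same root parity as the `0`-nodes of `t₁`.
-/

namespace EvenShift

open Finset

def rootParity (t : ITree Bool) (w : Word) : ZMod 2 := pathOnes t [] w

def ZeroParity (t : ITree Bool) (c : ZMod 2) : Prop :=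
  ∀ w, t w = false → rootParity t w = c

lemma pathOnes_eq_sum (t : ITree Bool) (s m : Word) :
    pathOnes t s m = ∑ j ∈ range (m.length + 1), (t (s ++ m.take j)).toNat := by
  rw [pathOnes, card_filter]
  exact sum_congr rfl fun j _ => by cases t (s ++ m.take j) <;> rfl

lemma rootParity_eq_sum (t : ITree Bool) (w : Word) :
    rootParity t w = ∑ j ∈ range (w.length + 1), ((t (w.take j)).toNat : ZMod 2) := by
  simp [rootParity, pathOnes_eq_sum]

lemma pathOnes_shiftW (x : Word) (t : ITree Bool) (s m : Word) :
    pathOnes (shiftW x t) s m = pathOnes t (x ++ s) m := by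
  simp only [pathOnes, shiftW, List.append_assoc]
  rfl

lemma pathOnes_append (t : ITree Bool) (s m : Word) :
    pathOnes t [] (s ++ m) + (t s).toNat = pathOnes t [] s + pathOnes t s m := by
  have hlen : (s ++ m).length + 1 = s.length + (m.length + 1) := by simp; omega
  have hs : ∑ j ∈ range s.length, (t ((s ++ m).take j)).toNat
      = ∑ j ∈ range s.length, (t (s.take j)).toNat :=
    sum_congr rfl fun j hj => by
      rw [List.take_append_of_le_length (mem_range.1 hj).le]
  simp only [pathOnes_eq_sum, List.nil_append, hlen, sum_range_add, sum_range_succ _ s.length,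
    List.take_length_add_append, List.take_length, hs]
  omega

lemma pathOnes_cast (t : ITree Bool) (s m : Word) :
    (pathOnes t s m : ZMod 2) = rootParity t (s ++ m) - rootParity t s + (t s).toNat := by
  have h := congrArg (Nat.cast : ℕ → ZMod 2) (pathOnes_append t s m)
  push_cast at h
  rw [rootParity, rootParity]
  linear_combination -h

lemma rootParity_append (t : ITree Bool) (p z : Word) :
    rootParity t (p ++ z) = rootParity t p + rootParity (shiftW p t) z - (t p).toNat := by
  have hshift : rootParity (shiftW p t) z = pathOnes t p z := by
    rw [rootParity, pathOnes_shiftW, List.append_nil]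
  rw [hshift, pathOnes_cast]
  ring

lemma pathOnes_eq_length_sub_one_of_zeros {t : ITree Bool} {s m : Word}
    (hs : t s = false) (hsm : t (s ++ m) = false)
    (hint : ∀ j, 0 < j → j < m.length → t (s ++ m.take j) = true) :
    pathOnes t s m = m.length - 1 := by
  have hfilter : (range (m.length + 1)).filter (fun j => t (s ++ m.take j) = true)
      = Ioo 0 m.length := by
    ext j
    simp only [mem_filter, mem_range, mem_Ioo]
    refine ⟨fun ⟨hj, htj⟩ => ⟨Nat.pos_of_ne_zero ?_, lt_of_le_of_ne (by omega) ?_⟩,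
      fun ⟨h0, hj⟩ => ⟨by omega, hint j h0 hj⟩⟩
    · rintro rfl
      simp [hs] at htj
    · rintro rfl
      simp [hsm] at htj
  rw [pathOnes, hfilter, Nat.card_Ioo, Nat.sub_zero]

theorem mem_evenShift_iff {t : ITree Bool} : t ∈ evenShift ↔ ∃ c, ZeroParity t c := by
  constructor
  · rintro ⟨-, hpar⟩
    by_cases hzero : ∃ w₀, t w₀ = false
    · obtain ⟨w₀, hw₀⟩ := hzero
      exact ⟨rootParity t w₀, fun w hw => (ZMod.natCast_eq_natCast_iff _ _ 2).2 (hpar [] w w₀ hw hw₀)⟩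
    · simp only [not_exists, Bool.not_eq_false] at hzero
      exact ⟨0, fun w hw => absurd hw (by simp [hzero w])⟩
  · rintro ⟨c, hc⟩
    have key : ∀ s m, t (s ++ m) = false →
        (pathOnes t s m : ZMod 2) = c - rootParity t s + (t s).toNat := by
      intro s m h
      rw [pathOnes_cast, hc _ h]
    refine ⟨fun s m _ hs hsm hint => ?_, fun s m₁ m₂ h₁ h₂ => ?_⟩
    · have h0 : ((m.length - 1 : ℕ) : ZMod 2) = 0 := by
        rw [← pathOnes_eq_length_sub_one_of_zeros hs hsm hint, key s m hsm, hc s hs, hs]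
        simp
      exact even_iff_two_dvd.2 ((ZMod.natCast_eq_zero_iff _ 2).1 h0)
    · exact (ZMod.natCast_eq_natCast_iff _ _ 2).1 (by rw [key s m₁ h₁, key s m₂ h₂])

theorem shiftW_mem_evenShift {t : ITree Bool} (x : Word) (ht : t ∈ evenShift) :
    shiftW x t ∈ evenShift := by
  obtain ⟨c, hc⟩ := mem_evenShift_iff.1 ht
  refine mem_evenShift_iff.2 ⟨c - rootParity t x + (t x).toNat, fun w hw => ?_⟩
  have h := rootParity_append t x w
  rw [hc _ hw] at h
  linear_combination -h

section Bridge

variable (a : Bool) (e c₂ : ZMod 2) (t₂ : ITree Bool)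

-- Level `0` repeats the leaf's own label `a`, so that `bridge` is literally the subtree of
-- the glued tree at that leaf.
def bridgeLabel : ℕ → Bool
  | 0 => a
  | 1 => decide (e = 1)
  | 2 => decide (c₂ = 0)
  | _ => true

def bridge : ITree Bool := fun z =>
  if z.length < 4 then bridgeLabel a e c₂ z.length else t₂ (z.drop 4)

variable {a e c₂ t₂}

lemma bridge_append_of_length_eq_four {x : Word} (hx : x.length = 4) (y : Word) :
    bridge a e c₂ t₂ (x ++ y) = t₂ y := by
  simp [bridge, hx, List.drop_left' hx]

lemma sum_bridgeLabel_of_eq_false {k : ℕ} (hk : 0 < k) (hk4 : k < 4)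
    (h : bridgeLabel a e c₂ k = false) :
    ∑ j ∈ range (k + 1), ((bridgeLabel a e c₂ j).toNat : ZMod 2) = a.toNat + e := by
  interval_cases k <;> revert h <;>
    simp only [sum_range_succ, sum_range_zero, bridgeLabel] <;> revert a e c₂ <;> decide

lemma sum_bridgeLabel_four :
    ∑ j ∈ range 4, ((bridgeLabel a e c₂ j).toNat : ZMod 2) = a.toNat + e + c₂ := by
  simp only [sum_range_succ, sum_range_zero, bridgeLabel]
  revert a e c₂
  decide

lemma rootParity_bridge_of_lt {z : Word} (hz : z.length < 4) :
    rootParity (bridge a e c₂ t₂) z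
      = ∑ j ∈ range (z.length + 1), ((bridgeLabel a e c₂ j).toNat : ZMod 2) := by
  rw [rootParity_eq_sum]
  refine sum_congr rfl fun j hj => ?_
  have hj : j ≤ z.length := Nat.lt_succ_iff.1 (mem_range.1 hj)
  simp [bridge, List.length_take, Nat.min_eq_left hj, show j < 4 by omega]

lemma rootParity_bridge_of_le {z : Word} (hz : 4 ≤ z.length) :
    rootParity (bridge a e c₂ t₂) z
      = ∑ j ∈ range 4, ((bridgeLabel a e c₂ j).toNat : ZMod 2) + rootParity t₂ (z.drop 4) := by
  rw [rootParity_eq_sum, rootParity_eq_sum,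
    show z.length + 1 = 4 + ((z.drop 4).length + 1) by simp; omega, sum_range_add]
  congr 1
  · refine sum_congr rfl fun j hj => ?_
    have hj : j < 4 := mem_range.1 hj
    simp [bridge, List.length_take, Nat.min_eq_left (show j ≤ z.length by omega), hj]
  · refine sum_congr rfl fun j _ => ?_
    simp [bridge, List.length_take, Nat.not_lt.2 hz, List.drop_take]

lemma rootParity_bridge_of_eq_false (hc₂ : ZeroParity t₂ c₂) {z : Word} (hz : z ≠ [])
    (h : bridge a e c₂ t₂ z = false) : rootParity (bridge a e c₂ t₂) z = a.toNat + e := by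
  rcases lt_or_ge z.length 4 with h4 | h4
  · rw [rootParity_bridge_of_lt h4]
    exact sum_bridgeLabel_of_eq_false (List.length_pos_iff.2 hz) h4 (by simpa [bridge, h4] using h)
  · have ht₂ : t₂ (z.drop 4) = false := by simpa [bridge, show ¬ z.length < 4 by omega] using h
    rw [rootParity_bridge_of_le h4, sum_bridgeLabel_four, hc₂ _ ht₂, add_assoc _ c₂,
      CharTwo.add_self_eq_zero, add_zero]

end Bridge

section Glue

variable {S : Set Word}

lemma SetLeaf.append_notMem (hS : ∀ x ∈ S, ∀ y : Word, y <+: x → y ∈ S) {p z : Word}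
    (hp : SetLeaf S p) (hz : z ≠ []) : p ++ z ∉ S := by
  obtain ⟨i, z', rfl⟩ := List.exists_cons_of_ne_nil hz
  exact fun h => hp.2 i (hS _ h _ ⟨z', by simp⟩)

lemma SetLeaf.eq_of_prefix (hS : ∀ x ∈ S, ∀ y : Word, y <+: x → y ∈ S) {p q w : Word}
    (hp : SetLeaf S p) (hq : SetLeaf S q) (hpw : p <+: w) (hqw : q <+: w) : p = q := by
  wlog hpq : p <+: q generalizing p q
  · exact (this hq hp hqw hpw ((List.prefix_or_prefix_of_prefix hpw hqw).resolve_left hpq)).symm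
  obtain ⟨z, rfl⟩ := hpq
  by_contra hne
  exact SetLeaf.append_notMem hS (z := z) hp (by rintro rfl; simp at hne) hq.1

noncomputable def glue (S : Set Word) (t₁ : ITree Bool) (B : Word → ITree Bool) :
    ITree Bool := fun w =>
  open Classical in
  if w ∈ S then t₁ w
  else if h : ∃ p, SetLeaf S p ∧ p <+: w then B h.choose (w.drop h.choose.length)
  else true

variable {t₁ : ITree Bool} {B : Word → ITree Bool}

lemma glue_of_mem {w : Word} (hw : w ∈ S) : glue S t₁ B w = t₁ w := by
  simp [glue, hw]

lemma glue_append_of_setLeaf (hS : ∀ x ∈ S, ∀ y : Word, y <+: x → y ∈ S) {p z : Word}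
    (hp : SetLeaf S p) (hz : z ≠ []) : glue S t₁ B (p ++ z) = B p z := by
  have hex : ∃ q, SetLeaf S q ∧ q <+: p ++ z := ⟨p, hp, List.prefix_append p z⟩
  have hq : hex.choose = p :=
    SetLeaf.eq_of_prefix hS hex.choose_spec.1 hp hex.choose_spec.2 (List.prefix_append p z)
  simp only [glue]
  rw [if_neg (SetLeaf.append_notMem hS hp hz), dif_pos hex, hq, List.drop_left]

lemma glue_eq_false {w : Word} (h : glue S t₁ B w = false) :
    w ∈ S ∨ ∃ p z, SetLeaf S p ∧ z ≠ [] ∧ w = p ++ z := by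
  by_cases hw : w ∈ S
  · exact Or.inl hw
  by_cases hex : ∃ p, SetLeaf S p ∧ p <+: w
  · obtain ⟨p, hp, z, rfl⟩ := hex
    exact Or.inr ⟨p, z, hp, by rintro rfl; simp [hp.1] at hw, rfl⟩
  · simp [glue, hw, hex] at h

lemma rootParity_glue_of_mem (hS : ∀ x ∈ S, ∀ y : Word, y <+: x → y ∈ S) {w : Word}
    (hw : w ∈ S) : rootParity (glue S t₁ B) w = rootParity t₁ w := by
  simp only [rootParity_eq_sum]
  exact sum_congr rfl fun j _ => by rw [glue_of_mem (hS w hw _ (List.take_prefix j w))]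

end Glue

theorem glue_bridge_mem_evenShift {S : Set Word} (hS : ∀ x ∈ S, ∀ y : Word, y <+: x → y ∈ S)
    {t₁ t₂ : ITree Bool} {c₁ c₂ : ZMod 2} (hc₁ : ZeroParity t₁ c₁) (hc₂ : ZeroParity t₂ c₂) :
    glue S t₁ (fun p => bridge (t₁ p) (c₁ - rootParity t₁ p) c₂ t₂) ∈ evenShift := by
  refine mem_evenShift_iff.2 ⟨c₁, fun w hw => ?_⟩
  rcases glue_eq_false hw with hwS | ⟨p, z, hp, hz, rfl⟩
  · rw [rootParity_glue_of_mem hS hwS]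
    exact hc₁ w (by rwa [glue_of_mem hwS] at hw)
  · have hshift : shiftW p (glue S t₁ fun p => bridge (t₁ p) (c₁ - rootParity t₁ p) c₂ t₂)
        = bridge (t₁ p) (c₁ - rootParity t₁ p) c₂ t₂ := by
      funext y
      rcases eq_or_ne y [] with rfl | hy
      · simp [shiftW, glue_of_mem hp.1, bridge, bridgeLabel]
      · exact glue_append_of_setLeaf hS hp hy
    rw [glue_append_of_setLeaf hS hp hz] at hw
    rw [rootParity_append, hshift, rootParity_bridge_of_eq_false hc₂ hz hw,
      rootParity_glue_of_mem hS hp.1, glue_of_mem hp.1]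
    ring

lemma mem_fullCode {w : Word} {k : ℕ} : w ∈ fullCode k ↔ w.length = k := by
  simp only [fullCode, mem_image, mem_univ, true_and]
  exact ⟨by rintro ⟨f, rfl⟩; simp, by rintro rfl; exact ⟨w.get, List.ofFn_get w⟩⟩

theorem isCPC_fullCode {k : ℕ} (hk : 0 < k) : IsCPC (fullCode k) := by
  refine ⟨fun h => hk.ne (mem_fullCode.1 h), fun p hp q hq hpq => ?_, fun x hx => ?_⟩
  · exact hpq.eq_of_length (by rw [mem_fullCode.1 hp, mem_fullCode.1 hq])
  · have hsup : k ≤ (fullCode k).sup List.length := by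
      simpa using le_sup (f := List.length) (mem_fullCode.2 (List.length_replicate (a := false)))
    exact ⟨x.take k, mem_fullCode.2 (by simp; omega), List.take_prefix k x⟩

theorem connectedThrough_fullCode_four {u v : Pattern Bool} (hu : u.PrefixClosed)
    (hu' : AcceptedIn evenShift u) (hv' : AcceptedIn evenShift v) :
    ConnectedThrough evenShift (fullCode 4) u v := by
  obtain ⟨t₁, ht₁, x₁, hx₁⟩ := hu'
  obtain ⟨t₂, ht₂, x₂, hx₂⟩ := hv'
  obtain ⟨c₁, hc₁⟩ := mem_evenShift_iff.1 (shiftW_mem_evenShift x₁ ht₁)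
  obtain ⟨c₂, hc₂⟩ := mem_evenShift_iff.1 (shiftW_mem_evenShift x₂ ht₂)
  refine ⟨_, glue_bridge_mem_evenShift hu hc₁ hc₂, fun y hy => ?_, fun w hw x hx y hy => ?_⟩
  · rw [glue_of_mem hy, hx₁ y hy, shiftW]
  · have hx4 : x.length = 4 := mem_fullCode.1 hx
    have hxy : x ++ y ≠ [] := by simp [← List.length_pos_iff, hx4]
    rw [List.append_assoc, glue_append_of_setLeaf hu hw hxy, bridge_append_of_length_eq_four hx4,
      hx₂ y hy, shiftW]

end EvenShift

/-- the even tree-shift is uniformly strongly irreducible with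
complete prefix code Σ^4: any two accepted patterns are connected through Σ^4. -/
theorem stmt16 :
    UniformlyStronglyIrreducible evenShift ∧
    IsCPC (fullCode 4) ∧
    ∀ u v : Pattern Bool, GoodPattern evenShift u → GoodPattern evenShift v →
      ConnectedThrough evenShift (fullCode 4) u v := by
  have hconn : ∀ u v : Pattern Bool, GoodPattern evenShift u → GoodPattern evenShift v →
      ConnectedThrough evenShift (fullCode 4) u v :=
    fun _ _ hu hv => EvenShift.connectedThrough_fullCode_four hu.2.1 hu.2.2 hv.2.2
  have hcpc : IsCPC (fullCode 4) := EvenShift.isCPC_fullCode four_pos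
  exact ⟨⟨4, hcpc, hconn⟩, hcpc, hconn⟩
end

section
/- The even tree-shift Y is a sofic tree-shift: it is the image of the simplified golden-mean tree-shift X under the sliding block code φ = Φ_∞ induced by the 2-block map Φ with Φ(u) = 0 if u = (0,0,0) and Φ(u) = 1 otherwise; that is, φ(X) = Y, where φ(t)(x) = Φ(t(x), t(x0), t(x1)) for every x ∈ Σ*. -/
/-- The forbidden set of the simplified golden-mean tree-shift: 2-blocks u
(support Σ_1) with u(0) ≠ u(1) or u(ε) = u(0) = u(1) = 1. -/
def goldenF : Set (Pattern Bool) :=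
  { u | u.supp = { x : Word | x.length ≤ 1 } ∧
        (u.val [false] ≠ u.val [true] ∨
          (u.val [] = true ∧ u.val [false] = true ∧ u.val [true] = true)) }

/-!
On a tree `t` of the golden-mean shift the two children of a node carry the same label, and a node
labeled 1 has children labeled 0; hence `φ(t)(x) = t(x) + t(x0)` with no carry, and along any path
the number of 1's of `φ(t)` telescopes to `t(start) + t(end·0)` modulo 2. A node of `φ(t)` labeled 0
has `t(x0) = 0`, so the parity of a path ending at a 0 depends only on its start: this is
condition (2), and condition (1) is the special case of a run `0 1 … 1 0` compared with the empty
path. Conversely, for `s ∈ Y` the parity `t(x)` of the number of 1's on any path from `x` to a 0 of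
`s` is well defined, satisfies `t(xi) = s(x) ∧ ¬t(x)`, and this `t` is a golden-mean preimage of `s`.
-/

lemma pathOnes_eq_sum (t : ITree Bool) (s m : Word) :
    pathOnes t s m = ∑ j ∈ Finset.range (m.length + 1), (t (s ++ m.take j)).toNat := by
  rw [pathOnes, Finset.card_filter]
  exact Finset.sum_congr rfl fun j _ => by cases t (s ++ m.take j) <;> rfl

@[simp]
lemma pathOnes_nil (t : ITree Bool) (s : Word) : pathOnes t s [] = (t s).toNat := by
  simp [pathOnes_eq_sum]

lemma pathOnes_cons (t : ITree Bool) (s : Word) (i : Bool) (m : Word) :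
    pathOnes t s (i :: m) = (t s).toNat + pathOnes t (s ++ [i]) m := by
  rw [pathOnes_eq_sum, pathOnes_eq_sum, List.length_cons, Finset.sum_range_succ', add_comm]
  simp

lemma pathOnes_eq_of_run (t : ITree Bool) (s m : Word) (hs : t s = false)
    (hsm : t (s ++ m) = false)
    (hrun : ∀ j, 0 < j → j < m.length → t (s ++ m.take j) = true) :
    pathOnes t s m = m.length - 1 := by
  suffices h : (Finset.range (m.length + 1)).filter (fun j => t (s ++ m.take j) = true) =
      Finset.Ioo 0 m.length by
    rw [pathOnes, h, Nat.card_Ioo, Nat.sub_zero]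
  ext j
  simp only [Finset.mem_filter, Finset.mem_range, Finset.mem_Ioo]
  constructor
  · rintro ⟨hj, htj⟩
    rcases Nat.eq_zero_or_pos j with rfl | hj0
    · simp_all
    rcases (Nat.lt_succ_iff.1 hj).lt_or_eq with hjm | rfl
    · exact ⟨hj0, hjm⟩
    · simp_all
  · rintro ⟨hj0, hjm⟩
    exact ⟨by omega, hrun j hj0 hjm⟩

def HasConsistentParity (s : ITree Bool) : Prop :=
  ∀ x m₁ m₂ : Word, s (x ++ m₁) = false → s (x ++ m₂) = false →
    pathOnes s x m₁ % 2 = pathOnes s x m₂ % 2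

lemma mem_evenShift_iff {s : ITree Bool} : s ∈ evenShift ↔ HasConsistentParity s := by
  refine ⟨And.right, fun hs => ⟨fun x m _ hx hxm hrun => ?_, hs⟩⟩
  have hpar := hs x m [] hxm (by simpa using hx)
  rw [pathOnes_eq_of_run s x m hx hxm hrun, pathOnes_nil, hx] at hpar
  exact Nat.even_iff.2 hpar

def IsGoldenMean (t : ITree Bool) : Prop :=
  ∀ x : Word, t (x ++ [true]) = t (x ++ [false]) ∧ (t x && t (x ++ [false])) = false

lemma mem_treeShiftOf_goldenF_iff {t : ITree Bool} :
    t ∈ treeShiftOf goldenF ↔ IsGoldenMean t := by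
  constructor
  · intro ht x
    by_contra hx
    refine ht ⟨{y | y.length ≤ 1}, fun y => t (x ++ y)⟩ ⟨rfl, ?_⟩ ⟨x, fun _ _ => rfl⟩
    simp only [List.append_nil]
    revert hx
    cases t x <;> cases t (x ++ [false]) <;> cases t (x ++ [true]) <;> simp
  · rintro ht u ⟨hsupp, hu⟩ ⟨x, hx⟩
    have hval : ∀ y : Word, y.length ≤ 1 → u.val y = t (x ++ y) := fun y hy =>
      hx y (hsupp ▸ hy)
    rw [hval [] (by simp), hval [false] (by simp), hval [true] (by simp),
      List.append_nil] at hu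
    obtain ⟨hsib, hprod⟩ := ht x
    revert hsib hprod hu
    cases t x <;> cases t (x ++ [false]) <;> cases t (x ++ [true]) <;> simp

def goldenCode (t : ITree Bool) : ITree Bool :=
  fun x => t x || t (x ++ [false]) || t (x ++ [true])

namespace IsGoldenMean

lemma child_eq {t : ITree Bool} (ht : IsGoldenMean t) (x : Word) (i : Bool) :
    t (x ++ [i]) = t (x ++ [false]) := by
  cases i
  · rfl
  · exact (ht x).1

lemma toNat_goldenCode {t : ITree Bool} (ht : IsGoldenMean t) (x : Word) :
    (goldenCode t x).toNat = (t x).toNat + (t (x ++ [false])).toNat := by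
  obtain ⟨hsib, hprod⟩ := ht x
  rw [goldenCode, hsib]
  revert hprod
  cases t x <;> cases t (x ++ [false]) <;> simp

lemma pathOnes_goldenCode_mod_two {t : ITree Bool} (ht : IsGoldenMean t) (x m : Word) :
    pathOnes (goldenCode t) x m % 2 = ((t x).toNat + (t (x ++ m ++ [false])).toNat) % 2 := by
  induction m generalizing x with
  | nil => simp [ht.toNat_goldenCode]
  | cons i m ih =>
    rw [pathOnes_cons, Nat.add_mod, ih, ht.toNat_goldenCode, ht.child_eq x i]
    simp only [List.append_assoc, List.singleton_append]
    omega

lemma hasConsistentParity_goldenCode {t : ITree Bool} (ht : IsGoldenMean t) :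
    HasConsistentParity (goldenCode t) := by
  have hzero : ∀ y, goldenCode t y = false → t (y ++ [false]) = false := fun y hy => by
    simp only [goldenCode, Bool.or_eq_false_iff] at hy
    exact hy.1.2
  intro x m₁ m₂ h₁ h₂
  rw [ht.pathOnes_goldenCode_mod_two, ht.pathOnes_goldenCode_mod_two, hzero _ h₁, hzero _ h₂]

end IsGoldenMean

/-- The recursion runs on reversed words, so that the label of `x ++ [i]` is computed from that
of its parent `x`. -/
noncomputable def goldenLiftRev (s : ITree Bool) : Word → Bool
  | [] => open Classical in decide (∃ m, s m = false ∧ pathOnes s [] m % 2 = 1)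
  | _ :: r => s r.reverse && !goldenLiftRev s r

noncomputable def goldenLift (s : ITree Bool) : ITree Bool := fun x => goldenLiftRev s x.reverse

lemma goldenLift_append_singleton (s : ITree Bool) (x : Word) (i : Bool) :
    goldenLift s (x ++ [i]) = (s x && !goldenLift s x) := by
  simp [goldenLift, goldenLiftRev]

lemma isGoldenMean_goldenLift (s : ITree Bool) : IsGoldenMean (goldenLift s) := fun x => by
  simp only [goldenLift_append_singleton]
  cases goldenLift s x <;> simp

open Classical in
lemma toNat_goldenLift {s : ITree Bool} (hs : HasConsistentParity s) {x m : Word}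
    (hm : s (x ++ m) = false) : (goldenLift s x).toNat = pathOnes s x m % 2 := by
  induction x using List.reverseRecOn generalizing m with
  | nil =>
    change (decide _).toNat = _
    by_cases hodd : ∃ m', s m' = false ∧ pathOnes s [] m' % 2 = 1
    · obtain ⟨m', hm', hm'odd⟩ := hodd
      rw [decide_eq_true ⟨m', hm', hm'odd⟩, hs [] m m' hm hm', hm'odd, Bool.toNat_true]
    · have hmeven : pathOnes s [] m % 2 ≠ 1 := fun h => hodd ⟨m, hm, h⟩
      rw [decide_eq_false hodd, Bool.toNat_false]
      omega
  | append_singleton x i ih =>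
    have hparent := ih (m := i :: m) (by simpa using hm)
    rw [pathOnes_cons] at hparent
    rw [goldenLift_append_singleton]
    cases hx : s x
    · have hroot := ih (m := []) (by simpa using hx)
      rw [pathOnes_nil, hx, Bool.toNat_false] at hroot
      rw [hx, Bool.toNat_false, zero_add] at hparent
      rw [Bool.false_and, Bool.toNat_false]
      omega
    · rw [hx, Bool.toNat_true] at hparent
      cases hl : goldenLift s x <;> rw [hl] at hparent <;>
        simp only [Bool.not_false, Bool.not_true, Bool.and_self, Bool.and_false, Bool.toNat_true,
          Bool.toNat_false] at hparent ⊢ <;> omega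

lemma goldenCode_goldenLift {s : ITree Bool} (hs : HasConsistentParity s) :
    goldenCode (goldenLift s) = s := by
  funext x
  rw [goldenCode, goldenLift_append_singleton, goldenLift_append_singleton]
  cases hx : s x
  · have h := toNat_goldenLift hs (m := []) (by simpa using hx)
    rw [pathOnes_nil, hx] at h
    simp_all
  · simp

/-- the even tree-shift is the image of the simplified
golden-mean tree-shift under the sliding block code induced by the 2-block map
Φ with Φ(0,0,0) = 0 and Φ(u) = 1 otherwise (so φ(t)(x) = t(x) ∨ t(x0) ∨ t(x1));
hence it is a sofic tree-shift. -/
theorem stmt17 :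
    (fun t : ITree Bool =>
        (fun x : Word => t x || t (x ++ [false]) || t (x ++ [true]))) ''
      treeShiftOf goldenF = evenShift := by
  ext s
  rw [mem_evenShift_iff]
  constructor
  · rintro ⟨t, ht, rfl⟩
    exact (mem_treeShiftOf_goldenF_iff.1 ht).hasConsistentParity_goldenCode
  · exact fun hs => ⟨goldenLift s, mem_treeShiftOf_goldenF_iff.2 (isGoldenMean_goldenLift s),
      goldenCode_goldenLift hs⟩
end
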